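/- arXiv:1312.7599 — 9 statements merged into one kernel-verified Lean document; each statement's English description precedes it below -/
import Mathlib

section
/- Let (A,[.,.]) be a Lie algebra and τ: A → K a linear map with τ([x,y]) = 0 for all x,y ∈ A. Then the ternary bracket [x,y,z]_τ = τ(x)[y,z] + τ(y)[z,x] + τ(z)[x,y] satisfies the fundamental (Filippov) identity: [x_1,x_2,[y_1,y_2,y_3]_τ]_τ = [[x_1,x_2,y_1]_τ,y_2,y_3]_τ + [y_1,[x_1,x_2,y_2]_τ,y_3]_τ + [y_1,y_2,[x_1,x_2,y_3]_τ]_τ. -/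
/-- The ternary bracket induced by a Lie bracket and a trace map satisfies
the fundamental (Filippov) identity. -/
theorem stmt2 (K A : Type*) [Field K] [CharZero K] [LieRing A] [LieAlgebra K A]
    (τ : A →ₗ[K] K) (hτ : ∀ x y : A, τ ⁅x, y⁆ = 0)
    (tb : A → A → A → A)
    (htb : ∀ x y z : A, tb x y z = τ x • ⁅y, z⁆ + τ y • ⁅z, x⁆ + τ z • ⁅x, y⁆) :
    ∀ x₁ x₂ y₁ y₂ y₃ : A,
      tb x₁ x₂ (tb y₁ y₂ y₃)
        = tb (tb x₁ x₂ y₁) y₂ y₃ + tb y₁ (tb x₁ x₂ y₂) y₃ + tb y₁ y₂ (tb x₁ x₂ y₃) := by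
  intro x₁ x₂ y₁ y₂ y₃
  have htb' : ∀ x y z : A, tb x y z = τ x • ⁅y, z⁆ - τ y • ⁅x, z⁆ + τ z • ⁅x, y⁆ := by
    intro x y z
    rw [htb, ← lie_skew x z, smul_neg]
    abel
  have jac : ∀ y : A, ⁅y, ⁅x₁, x₂⁆⁆ = ⁅x₂, ⁅x₁, y⁆⁆ - ⁅x₁, ⁅x₂, y⁆⁆ := by
    intro y
    rw [show ⁅y, ⁅x₁, x₂⁆⁆ = -⁅⁅x₁, x₂⁆, y⁆ from (lie_skew y ⁅x₁,x₂⁆).symm, lie_lie]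
    abel
  simp only [htb', map_add, map_sub, map_smul, hτ, smul_zero, mul_zero, zero_add, add_zero,
    sub_zero, zero_sub, zero_smul, smul_add, smul_sub, neg_smul, smul_neg, smul_smul,
    lie_add, add_lie, lie_sub, sub_lie, lie_smul, smul_lie, lie_lie, lie_neg, neg_lie, jac]
  module
end

section
/- Let (A,[.,.]) be a Lie algebra, τ a trace map, and [.,.,.]_τ the induced ternary bracket [x,y,z]_τ = τ(x)[y,z] + τ(y)[z,x] + τ(z)[x,y]. Let J be a Lie ideal of A. Then J is an ideal of the induced 3-Lie algebra (i.e., [A,A,J]_τ ⊆ J) if and only if [A,A] ⊆ J or J ⊆ ker τ. -/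
/-- A Lie ideal `J` of `A` is an ideal of the induced 3-Lie algebra iff
`[A,A] ⊆ J` or `J ⊆ ker τ`. -/
theorem stmt4 (K A : Type*) [Field K] [CharZero K] [LieRing A] [LieAlgebra K A]
    (τ : A →ₗ[K] K) (hτ : ∀ x y : A, τ ⁅x, y⁆ = 0)
    (tb : A → A → A → A)
    (htb : ∀ x y z : A, tb x y z = τ x • ⁅y, z⁆ + τ y • ⁅z, x⁆ + τ z • ⁅x, y⁆)
    (J : LieIdeal K A) :
    (∀ x y : A, ∀ j ∈ J, tb x y j ∈ J) ↔
      ((∀ x y : A, ⁅x, y⁆ ∈ J) ∨ (∀ j ∈ J, τ j = 0)) := by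
  constructor
  · intro h
    by_cases hJ : ∀ j ∈ J, τ j = 0
    · exact Or.inr hJ
    · left
      push_neg at hJ
      obtain ⟨j, hjJ, hj⟩ := hJ
      intro x y
      have key : τ j • ⁅x, y⁆ ∈ J := by
        have h1 : tb x y j ∈ J := h x y j hjJ
        rw [htb] at h1
        have h2 : τ x • ⁅y, j⁆ ∈ J := J.smul_mem _ (lie_mem_right K A J y j hjJ)
        have h3 : τ y • ⁅j, x⁆ ∈ J := J.smul_mem _ (lie_mem_left K A J j x hjJ)
        have h4 := J.sub_mem (J.sub_mem h1 h2) h3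
        have : τ x • ⁅y, j⁆ + τ y • ⁅j, x⁆ + τ j • ⁅x, y⁆ - τ x • ⁅y, j⁆ -
            τ y • ⁅j, x⁆ = τ j • ⁅x, y⁆ := by abel
        rwa [this] at h4
      have := J.smul_mem (τ j)⁻¹ key
      rwa [smul_smul, inv_mul_cancel₀ hj, one_smul] at this
  · rintro (h | h) x y j hj
    · rw [htb]
      exact J.add_mem (J.add_mem (J.smul_mem _ (h y j)) (J.smul_mem _ (h j x)))
        (J.smul_mem _ (h x y))
    · rw [htb, h j hj, zero_smul, add_zero]
      exact J.add_mem (J.smul_mem _ (lie_mem_right K A J y j hj))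
        (J.smul_mem _ (lie_mem_left K A J j x hj))
end

section
/- Let (A,[.,.]) be a Lie algebra, τ a trace map, and [x,y,z]_τ = τ(x)[y,z] + τ(y)[z,x] + τ(z)[x,y]. Then for any x,y,z in the span of all brackets [a,b,c]_τ, we have [x,y,z]_τ = 0. In particular the induced 3-Lie algebra is solvable with D^2(A_τ) = 0. -/
/-- The induced 3-Lie algebra is solvable: the ternary bracket vanishes on the
derived subalgebra `D¹(A_τ)`, hence `D²(A_τ) = 0`. -/
theorem stmt5 (K A : Type*) [Field K] [CharZero K] [LieRing A] [LieAlgebra K A]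
    (τ : A →ₗ[K] K) (hτ : ∀ x y : A, τ ⁅x, y⁆ = 0)
    (tb : A → A → A → A)
    (htb : ∀ x y z : A, tb x y z = τ x • ⁅y, z⁆ + τ y • ⁅z, x⁆ + τ z • ⁅x, y⁆)
    (D : Submodule K A)
    (hD : D = Submodule.span K {a : A | ∃ x y z : A, a = tb x y z}) :
    ∀ x ∈ D, ∀ y ∈ D, ∀ z ∈ D, tb x y z = 0 := by
  have hker : D ≤ LinearMap.ker τ := by
    rw [hD, Submodule.span_le]
    rintro a ⟨x, y, z, rfl⟩
    simp [LinearMap.mem_ker, htb, hτ]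
  intro x hx y hy z hz
  have h1 : τ x = 0 := hker hx
  have h2 : τ y = 0 := hker hy
  have h3 : τ z = 0 := hker hz
  simp [htb, h1, h2, h3]
end

section
/- Let (A,[.,.]) be a Lie algebra, τ a trace map, and A_τ the induced 3-Lie algebra. Suppose there exists i ∈ A such that [i,x,y]_τ = [x,y] for all x,y ∈ A. Then C^p(A_τ) = C^p(A) for all p ∈ ℕ, where C^p denotes the central descending series of the respective algebras. -/
/-- If there exists `i ∈ A` with `[i,x,y]_τ = [x,y]` for all `x,y`, then the
central descending series coincide: `C^p(A_τ) = C^p(A)` for all `p`. -/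
theorem stmt8 (K A : Type*) [Field K] [CharZero K] [LieRing A] [LieAlgebra K A]
    (τ : A →ₗ[K] K) (hτ : ∀ x y : A, τ ⁅x, y⁆ = 0)
    (tb : A → A → A → A)
    (htb : ∀ x y z : A, tb x y z = τ x • ⁅y, z⁆ + τ y • ⁅z, x⁆ + τ z • ⁅x, y⁆)
    (i : A) (hi : ∀ x y : A, tb i x y = ⁅x, y⁆)
    (C Ct : ℕ → Submodule K A)
    (hC0 : C 0 = ⊤)
    (hCs : ∀ p, C (p + 1) = Submodule.span K {a : A | ∃ x ∈ C p, ∃ y : A, a = ⁅x, y⁆})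
    (hCt0 : Ct 0 = ⊤)
    (hCts : ∀ p, Ct (p + 1) = Submodule.span K {a : A | ∃ x ∈ Ct p, ∃ y z : A, a = tb x y z}) :
    ∀ p : ℕ, Ct p = C p := by
  have hker : ∀ p, C (p + 1) ≤ LinearMap.ker τ := by
    intro p
    rw [hCs, Submodule.span_le]
    rintro a ⟨x, -, y, rfl⟩
    simpa using hτ x y
  have hbr : ∀ p, ∀ x ∈ C p, ∀ y : A, ⁅x, y⁆ ∈ C (p + 1) := by
    intro p x hx y
    rw [hCs]
    exact Submodule.subset_span ⟨x, hx, y, rfl⟩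
  intro p
  induction p with
  | zero => rw [hCt0, hC0]
  | succ p ih =>
    apply le_antisymm
    · rw [hCts, Submodule.span_le]
      rintro a ⟨x, hx, y, z, rfl⟩
      rw [ih] at hx
      rw [htb]
      refine Submodule.add_mem _ (Submodule.add_mem _ ?_ ?_) ?_
      · match p with
        | 0 =>
          exact Submodule.smul_mem _ _ (hbr 0 y (by rw [hC0]; trivial) z)
        | p + 1 =>
          have h0 : τ x = 0 := hker p hx
          rw [h0, zero_smul]; exact Submodule.zero_mem _
      · have hzx : ⁅z, x⁆ = -⁅x, z⁆ := by rw [← lie_skew]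
        rw [hzx, smul_neg]
        exact Submodule.neg_mem _ (Submodule.smul_mem _ _ (hbr p x hx z))
      · exact Submodule.smul_mem _ _ (hbr p x hx y)
    · rw [hCs, Submodule.span_le]
      rintro a ⟨x, hx, y, rfl⟩
      rw [hCts]
      match p with
      | 0 =>
        have h1 : ⁅x, y⁆ = tb i x y := (hi x y).symm
        rw [h1]
        exact Submodule.subset_span ⟨i, by rw [hCt0]; trivial, x, y, rfl⟩
      | p + 1 =>
        have hτx : τ x = 0 := hker p hx
        have key : tb x y i = ⁅x, y⁆ := by
          have h1 := hi x y
          rw [htb] at h1 ⊢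
          rw [hτx] at h1 ⊢
          simp only [zero_smul, add_zero, zero_add] at h1 ⊢
          rw [add_comm]
          exact h1
        rw [← key]
        refine Submodule.subset_span ⟨x, ?_, y, i, rfl⟩
        rw [ih]; exact hx
end

section
/- Let (A,[.,.]) be a Lie algebra, τ a trace map, and A_τ the induced 3-Lie algebra. If (A,[.,.]) is nilpotent of class p, then A_τ is nilpotent of class at most p. -/
/-- If the Lie algebra `A` is nilpotent of class `p` (`C^p(A) = 0`), then the
induced 3-Lie algebra `A_τ` is nilpotent of class at most `p` (`C^p(A_τ) = 0`). -/
theorem stmt9 (K A : Type*) [Field K] [CharZero K] [LieRing A] [LieAlgebra K A]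
    (τ : A →ₗ[K] K) (hτ : ∀ x y : A, τ ⁅x, y⁆ = 0)
    (tb : A → A → A → A)
    (htb : ∀ x y z : A, tb x y z = τ x • ⁅y, z⁆ + τ y • ⁅z, x⁆ + τ z • ⁅x, y⁆)
    (C Ct : ℕ → Submodule K A)
    (hC0 : C 0 = ⊤)
    (hCs : ∀ p, C (p + 1) = Submodule.span K {a : A | ∃ x ∈ C p, ∃ y : A, a = ⁅x, y⁆})
    (hCt0 : Ct 0 = ⊤)
    (hCts : ∀ p, Ct (p + 1) = Submodule.span K {a : A | ∃ x ∈ Ct p, ∃ y z : A, a = tb x y z})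
    (p : ℕ) (hnil : C p = ⊥) :
    Ct p = ⊥ := by
  -- τ vanishes on C (n+1)
  have hker : ∀ n, C (n + 1) ≤ LinearMap.ker τ := by
    intro n
    rw [hCs]
    apply Submodule.span_le.2
    rintro a ⟨x, hx, y, rfl⟩
    simpa using hτ x y
  -- main claim: Ct n ≤ C n
  have key : ∀ n, Ct n ≤ C n := by
    intro n
    induction n with
    | zero => rw [hCt0, hC0]
    | succ n ih =>
      rw [hCts, hCs]
      apply Submodule.span_le.2
      rintro a ⟨x, hx, y, z, rfl⟩
      rw [htb]
      have hx' : x ∈ C n := ih hx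
      have h3 : (τ z • ⁅x, y⁆ : A) ∈
          Submodule.span K {a : A | ∃ x ∈ C n, ∃ y : A, a = ⁅x, y⁆} :=
        Submodule.smul_mem _ _ (Submodule.subset_span ⟨x, hx', y, rfl⟩)
      have h2 : (τ y • ⁅z, x⁆ : A) ∈
          Submodule.span K {a : A | ∃ x ∈ C n, ∃ y : A, a = ⁅x, y⁆} := by
        have : (τ y • ⁅z, x⁆ : A) = (-(τ y)) • ⁅x, z⁆ := by
          rw [neg_smul, ← smul_neg, lie_skew]
        rw [this]
        exact Submodule.smul_mem _ _ (Submodule.subset_span ⟨x, hx', z, rfl⟩)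
      have h1 : (τ x • ⁅y, z⁆ : A) ∈
          Submodule.span K {a : A | ∃ x ∈ C n, ∃ y : A, a = ⁅x, y⁆} := by
        cases n with
        | zero =>
          refine Submodule.smul_mem _ _ (Submodule.subset_span ⟨y, ?_, z, rfl⟩)
          rw [hC0]; trivial
        | succ m =>
          have : τ x = 0 := hker m hx'
          rw [this, zero_smul]
          exact Submodule.zero_mem _
      exact Submodule.add_mem _ (Submodule.add_mem _ h1 h2) h3
  exact le_bot_iff.mp (hnil ▸ key p)
end

section
/- Let (A,[.,.]) be a Lie algebra, τ a trace map, [.,.,.]_τ the induced ternary bracket, and f: A → A a Lie algebra derivation. Then for all x,y,z ∈ A: f([x,y,z]_τ) = [f(x),y,z]_τ + [x,f(y),z]_τ + [x,y,f(z)]_τ − [x,y,z]_{τ∘f}, where [x,y,z]_{τ∘f} = τ(f(x))[y,z] + τ(f(y))[z,x] + τ(f(z))[x,y]. Consequently, f is a derivation of the induced 3-Lie algebra if and only if [x,y,z]_{τ∘f} = 0 for all x,y,z ∈ A. -/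
/-- For a Lie algebra derivation `f`, one has
`f([x,y,z]_τ) = [f x,y,z]_τ + [x,f y,z]_τ + [x,y,f z]_τ − [x,y,z]_{τ∘f}`;
consequently, `f` is a derivation of the induced 3-Lie algebra iff
`[x,y,z]_{τ∘f} = 0` for all `x,y,z`. -/
theorem stmt12 (K A : Type*) [Field K] [CharZero K] [LieRing A] [LieAlgebra K A]
    (τ : A →ₗ[K] K) (hτ : ∀ x y : A, τ ⁅x, y⁆ = 0)
    (tb : A → A → A → A)
    (htb : ∀ x y z : A, tb x y z = τ x • ⁅y, z⁆ + τ y • ⁅z, x⁆ + τ z • ⁅x, y⁆)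
    (tbf : A → A → A → A)
    (f : A →ₗ[K] A) (hf : ∀ x y : A, f ⁅x, y⁆ = ⁅f x, y⁆ + ⁅x, f y⁆)
    (htbf : ∀ x y z : A,
      tbf x y z = τ (f x) • ⁅y, z⁆ + τ (f y) • ⁅z, x⁆ + τ (f z) • ⁅x, y⁆) :
    (∀ x y z : A,
      f (tb x y z) = tb (f x) y z + tb x (f y) z + tb x y (f z) - tbf x y z) ∧
    ((∀ x y z : A, f (tb x y z) = tb (f x) y z + tb x (f y) z + tb x y (f z)) ↔
      (∀ x y z : A, tbf x y z = 0)) := by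
  have key : ∀ x y z : A,
      f (tb x y z) = tb (f x) y z + tb x (f y) z + tb x y (f z) - tbf x y z := by
    intro x y z
    simp only [htb, htbf, map_add, map_smul, hf, hτ, zero_smul, smul_add]
    module
  refine ⟨key, ?_, ?_⟩
  · intro h x y z
    have := (key x y z).symm.trans (h x y z)
    linear_combination (norm := abel) -this
  · intro h x y z
    rw [key x y z, h, sub_zero]
end

section
/- Let (A,[.,.]) be a Lie algebra, τ a trace map, and ω: A × A → K a skew-symmetric bilinear 2-cocycle (i.e., ω([x,y],z) + ω([y,z],x) + ω([z,x],y) = 0). Extend A to Ā = A ⊕ Kc with bracket [x,y]_c = [x,y] + ω(x,y)c, [x,c]_c = 0, and extend τ to Ā by τ(c) = 0. Then the ternary bracket induced on Ā by [.,.]_c and τ satisfies: [x,y,z]_{c,τ} = [x,y,z]_τ + ω_τ(x,y,z)c for x,y,z ∈ A, where ω_τ(x,y,z) = τ(x)ω(y,z) + τ(y)ω(z,x) + τ(z)ω(x,y), and [x,y,c]_{c,τ} = 0; hence Ā with this ternary bracket is a central extension of the induced 3-Lie algebra (A,[.,.,.]_τ). -/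
set_option maxHeartbeats 1000000 in
/-- A central extension `Ā = A ⊕ Kc` of the Lie algebra `A` by a 2-cocycle `ω`
(with `τ` extended by `τ(c) = 0`) induces a ternary bracket satisfying
`[x,y,z]_{c,τ} = [x,y,z]_τ + ω_τ(x,y,z)c` on `A`, with `c` central, and this
ternary bracket satisfies the fundamental identity; hence `Ā` is a central
extension of the induced 3-Lie algebra. Here `Ā` is modelled as `A × K` with
`c = (0,1)`. -/
theorem stmt16 (K A : Type*) [Field K] [CharZero K] [LieRing A] [LieAlgebra K A]
    (τ : A →ₗ[K] K) (hτ : ∀ x y : A, τ ⁅x, y⁆ = 0)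
    (tb : A → A → A → A)
    (htb : ∀ x y z : A, tb x y z = τ x • ⁅y, z⁆ + τ y • ⁅z, x⁆ + τ z • ⁅x, y⁆)
    (ω : A →ₗ[K] A →ₗ[K] K)
    (hωskew : ∀ x y : A, ω x y = - ω y x)
    (hωcocycle : ∀ x y z : A, ω ⁅x, y⁆ z + ω ⁅y, z⁆ x + ω ⁅z, x⁆ y = 0)
    (bc : A × K → A × K → A × K)
    (hbc : ∀ u v : A × K, bc u v = (⁅u.1, v.1⁆, ω u.1 v.1))
    (τbar : A × K →ₗ[K] K) (hτbar : ∀ u : A × K, τbar u = τ u.1)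
    (tbc : A × K → A × K → A × K → A × K)
    (htbc : ∀ u v w : A × K,
      tbc u v w = τbar u • bc v w + τbar v • bc w u + τbar w • bc u v) :
    (∀ x y z : A,
        tbc (x, 0) (y, 0) (z, 0)
          = (tb x y z, τ x * ω y z + τ y * ω z x + τ z * ω x y)) ∧
    (∀ u v : A × K, tbc u v (0, 1) = 0) ∧
    (∀ u₁ u₂ v₁ v₂ v₃ : A × K,
        tbc u₁ u₂ (tbc v₁ v₂ v₃)
          = tbc (tbc u₁ u₂ v₁) v₂ v₃ + tbc v₁ (tbc u₁ u₂ v₂) v₃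
            + tbc v₁ v₂ (tbc u₁ u₂ v₃)) := by
  have key : ∀ u v w : A × K, tbc u v w =
      (τ u.1 • ⁅v.1, w.1⁆ + τ v.1 • ⁅w.1, u.1⁆ + τ w.1 • ⁅u.1, v.1⁆,
       τ u.1 * ω v.1 w.1 + τ v.1 * ω w.1 u.1 + τ w.1 * ω u.1 v.1) := by
    intro u v w
    rw [htbc, hbc, hbc, hbc, hτbar u, hτbar v, hτbar w]
    simp [Prod.ext_iff, Prod.smul_def, smul_eq_mul]
  have hjac : ∀ p q r : A, ⁅p, ⁅q, r⁆⁆ - ⁅q, ⁅p, r⁆⁆ + ⁅r, ⁅p, q⁆⁆ = 0 := by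
    intro p q r
    have h1 : ⁅r, ⁅p, q⁆⁆ = -⁅⁅p, q⁆, r⁆ := by rw [← lie_skew]
    rw [h1, lie_lie]
    abel
  have hswap : ∀ p q r : A, ⁅p, ⁅q, r⁆⁆ + ⁅p, ⁅r, q⁆⁆ = 0 := by
    intro p q r
    have h : ⁅r, q⁆ = -⁅q, r⁆ := by rw [lie_skew]
    rw [show ⁅q, r⁆ = -⁅r, q⁆ from by rw [h]; abel, lie_neg]
    abel
  have hpswap : ∀ m p q : A, ω m ⁅p, q⁆ + ω m ⁅q, p⁆ = 0 := by
    intro m p q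
    have h : ⁅q, p⁆ = -⁅p, q⁆ := by rw [lie_skew]
    rw [h, map_neg]
    ring
  have hqswap : ∀ p q m : A, ω ⁅p, q⁆ m + ω ⁅q, p⁆ m = 0 := by
    intro p q m
    have h : ⁅q, p⁆ = -⁅p, q⁆ := by rw [lie_skew]
    rw [h, map_neg, LinearMap.neg_apply]
    ring
  refine ⟨?_, ?_, ?_⟩
  · intro x y z; rw [key, htb]
  · intro u v; rw [key]; simp
  · intro u₁ u₂ v₁ v₂ v₃
    obtain ⟨x, xs⟩ := u₁; obtain ⟨y, ys⟩ := u₂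
    obtain ⟨a, as⟩ := v₁; obtain ⟨b, bs⟩ := v₂; obtain ⟨c, cs⟩ := v₃
    simp only [key, Prod.mk_add_mk, Prod.mk.injEq]
    constructor
    · simp only [map_add, map_smul, hτ, smul_eq_mul, mul_zero, zero_smul, zero_add, add_zero,
        lie_add, add_lie, lie_smul, smul_lie, smul_zero, smul_add, lie_lie]
      linear_combination (norm := module)
        (-(τ a * τ y)) • hjac b x c + (τ b * τ y) • hswap x a c
          + (-(τ b * τ y)) • hjac x a c + (-(τ b * τ y)) • hswap a x c
          + (-(τ c * τ y)) • hjac a x b + (-(τ a * τ b)) • hjac x y c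
          + (-(τ a * τ c)) • hjac x y b + (-(τ b * τ c)) • hjac x y a
    · simp only [map_add, map_smul, hτ, smul_eq_mul, mul_zero, zero_mul, zero_add, add_zero,
        LinearMap.add_apply, LinearMap.smul_apply, LinearMap.map_smul₂, LinearMap.map_add₂]
      linear_combination
        (τ a * τ x) * (hωskew y ⁅b, c⁆ - hωcocycle y b c - hωskew b ⁅y, c⁆ + hqswap y c b)
          + (τ b * τ x) * (-hωskew y ⁅a, c⁆ + hpswap y a c + hωcocycle y a c
              - hqswap y c a - hωskew c ⁅y, a⁆)
          + (τ c * τ x) * (hωskew y ⁅a, b⁆ - hωcocycle y a b - hωskew a ⁅y, b⁆ + hqswap y b a)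
          + (τ a * τ y) * (hqswap b c x - hωcocycle x c b + hωskew b ⁅x, c⁆ - hpswap b x c)
          + (τ b * τ y) * (hqswap a c x - hωcocycle x a c + hωskew c ⁅x, a⁆ - hpswap c x a)
          + (τ c * τ y) * (hqswap a b x - hωcocycle x b a + hωskew a ⁅x, b⁆ - hpswap a x b)
          + (-(τ a * τ b)) * hωskew c ⁅x, y⁆
          + (-(τ a * τ c)) * hωskew b ⁅x, y⁆
          + (-(τ b * τ c)) * hωskew a ⁅x, y⁆
end

section
/- Let (A,[.,.,.]) be a 3-Lie algebra with basis (e_i)_{1≤i≤d}, and suppose there is an index i₀ such that [e_j, e_k, e_l] = 0 whenever i₀ ∉ {j,k,l}. Define a bilinear skew-symmetric map by [e_j,e_k] := [e_{i₀}, e_j, e_k] for j,k ≠ i₀ and [e_{i₀}, e_j] := 0, and let τ be the linear form picking the e_{i₀}-coordinate. Assume moreover that τ([e_{i₀},e_j,e_k]) = 0 for all j,k. Then [.,.] satisfies the Jacobi identity and the 3-Lie bracket induced from ([.,.], τ) coincides with the original bracket [.,.,.]. -/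
/-!
The ternary bracket restricted to `e i₀` in its first slot is the binary bracket `b`. Since
`[e i₀, x, e i₀] = 0`, the Filippov identity for `[e i₀, x, -]` acting on `[e i₀, y, z]` is
exactly the Jacobi identity for `b`. Both sides of the induced-bracket identity are trilinear,
so it suffices to compare them on basis vectors: when one argument is `e i₀` the only surviving
term is a cyclic permutation of `[e i₀, ·, ·]`, and when none is, both sides vanish.
-/

open Module

namespace ThreeLie

section Trilinear

variable {R A : Type*} [CommRing R] [AddCommGroup A] [Module R A]

/-- `rotate S x y z = S y z x`. -/
def rotate (S : A →ₗ[R] A →ₗ[R] A →ₗ[R] A) : A →ₗ[R] A →ₗ[R] A →ₗ[R] A :=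
  (LinearMap.lflip.toLinearMap ∘ₗ S).flip

/-- The bracket `[x, y, z]_τ = τ x • [y, z] + τ y • [z, x] + τ z • [x, y]`. -/
def inducedBracket (τ : A →ₗ[R] R) (g : A →ₗ[R] A →ₗ[R] A) : A →ₗ[R] A →ₗ[R] A →ₗ[R] A :=
  τ.smulRight g + rotate (τ.smulRight g) + rotate (rotate (τ.smulRight g))

theorem inducedBracket_apply (τ : A →ₗ[R] R) (g : A →ₗ[R] A →ₗ[R] A) (x y z : A) :
    inducedBracket τ g x y z = τ x • g y z + τ y • g z x + τ z • g x y :=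
  rfl

variable {f : A →ₗ[R] A →ₗ[R] A →ₗ[R] A}

theorem apply_self_left [IsAddTorsionFree A] (hskew12 : ∀ x y z : A, f x y z = - f y x z)
    (x y : A) : f x x y = 0 :=
  self_eq_neg.mp (hskew12 x x y)

theorem apply_self_right [IsAddTorsionFree A] (hskew23 : ∀ x y z : A, f x y z = - f x z y)
    (x y : A) : f x y y = 0 :=
  self_eq_neg.mp (hskew23 x y y)

theorem apply_self_outer [IsAddTorsionFree A] (hskew12 : ∀ x y z : A, f x y z = - f y x z)
    (hskew23 : ∀ x y z : A, f x y z = - f x z y) (x y : A) : f x y x = 0 := by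
  rw [hskew12, apply_self_right hskew23, neg_zero]

theorem apply_cyclic (hskew12 : ∀ x y z : A, f x y z = - f y x z)
    (hskew23 : ∀ x y z : A, f x y z = - f x z y) (x y z : A) : f x y z = f z x y := by
  rw [hskew12, hskew23, neg_neg, hskew12 y z x, hskew23 z y x, neg_neg]

theorem jacobi_of_filippov
    (hFI : ∀ x₁ x₂ y₁ y₂ y₃ : A,
      f x₁ x₂ (f y₁ y₂ y₃)
        = f (f x₁ x₂ y₁) y₂ y₃ + f y₁ (f x₁ x₂ y₂) y₃ + f y₁ y₂ (f x₁ x₂ y₃))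
    (a : A) (ha : ∀ x, f a x a = 0) (x y z : A) :
    f a x (f a y z) = f a (f a x y) z + f a y (f a x z) := by
  rw [hFI, ha, map_zero, LinearMap.zero_apply, LinearMap.zero_apply, zero_add]

end Trilinear

section Basis

variable {ι R A : Type*} [CommRing R] [AddCommGroup A] [Module R A] [IsAddTorsionFree A]
  (e : Basis ι R A) (i₀ : ι) {f : A →ₗ[R] A →ₗ[R] A →ₗ[R] A}

theorem eq_apply_of_eq_on_basis (hskew12 : ∀ x y z : A, f x y z = - f y x z)
    (hskew23 : ∀ x y z : A, f x y z = - f x z y) {b : A →ₗ[R] A →ₗ[R] A}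
    (hbskew : ∀ x y : A, b x y = - b y x)
    (hb : ∀ j k : ι, j ≠ i₀ → k ≠ i₀ → b (e j) (e k) = f (e i₀) (e j) (e k))
    (hb0 : ∀ j : ι, b (e i₀) (e j) = 0) :
    b = f (e i₀) := by
  refine e.ext fun j => e.ext fun k => ?_
  rcases eq_or_ne j i₀ with rfl | hj
  · rw [hb0, apply_self_left hskew12]
  rcases eq_or_ne k i₀ with rfl | hk
  · rw [hbskew, hb0, neg_zero, apply_self_outer hskew12 hskew23]
  exact hb j k hj hk

theorem inducedBracket_coord_eq (hskew12 : ∀ x y z : A, f x y z = - f y x z)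
    (hskew23 : ∀ x y z : A, f x y z = - f x z y)
    (hzero : ∀ j k l : ι, j ≠ i₀ → k ≠ i₀ → l ≠ i₀ → f (e j) (e k) (e l) = 0) :
    inducedBracket (e.coord i₀) (f (e i₀)) = f := by
  have hτ₀ : e.coord i₀ (e i₀) = 1 := by simp
  have hτ : ∀ {j}, j ≠ i₀ → e.coord i₀ (e j) = 0 := fun hj => by simp [hj]
  have h11 := apply_self_left hskew12
  have h13 := apply_self_outer hskew12 hskew23
  refine e.ext fun j => e.ext fun k => e.ext fun l => ?_
  rw [inducedBracket_apply]
  rcases eq_or_ne j i₀ with rfl | hj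
  · simp [hτ₀, h11, h13]
  rcases eq_or_ne k i₀ with rfl | hk
  · simp only [hτ₀, hτ hj, h11, h13, smul_zero, one_smul, zero_add, add_zero]
    exact apply_cyclic hskew12 hskew23 _ _ _
  rcases eq_or_ne l i₀ with rfl | hl
  · simp only [hτ₀, hτ hj, hτ hk, h11, h13, smul_zero, one_smul, zero_add, add_zero]
    exact (apply_cyclic hskew12 hskew23 _ _ _).symm
  simp [hτ hj, hτ hk, hτ hl, hzero j k l hj hk hl]

end Basis

end ThreeLie

open ThreeLie in
theorem stmt17_general (K A : Type*) [Field K] [CharZero K] [AddCommGroup A] [Module K A]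
    (d : ℕ) (e : Module.Basis (Fin d) K A) (i₀ : Fin d)
    (f : A →ₗ[K] A →ₗ[K] A →ₗ[K] A)
    (hskew12 : ∀ x y z : A, f x y z = - f y x z)
    (hskew23 : ∀ x y z : A, f x y z = - f x z y)
    (hFI : ∀ x₁ x₂ y₁ y₂ y₃ : A,
      f x₁ x₂ (f y₁ y₂ y₃)
        = f (f x₁ x₂ y₁) y₂ y₃ + f y₁ (f x₁ x₂ y₂) y₃ + f y₁ y₂ (f x₁ x₂ y₃))
    (hzero : ∀ j k l : Fin d, j ≠ i₀ → k ≠ i₀ → l ≠ i₀ → f (e j) (e k) (e l) = 0)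
    (b : A →ₗ[K] A →ₗ[K] A)
    (hbskew : ∀ x y : A, b x y = - b y x)
    (hb : ∀ j k : Fin d, j ≠ i₀ → k ≠ i₀ → b (e j) (e k) = f (e i₀) (e j) (e k))
    (hb0 : ∀ j : Fin d, b (e i₀) (e j) = 0) :
    (∀ x y z : A, b x (b y z) = b (b x y) z + b y (b x z)) ∧
    (∀ x y z : A,
      e.coord i₀ x • b y z + e.coord i₀ y • b z x + e.coord i₀ z • b x y
        = f x y z) := by
  have : IsAddTorsionFree A := .of_isTorsionFree K A
  obtain rfl : b = f (e i₀) := eq_apply_of_eq_on_basis e i₀ hskew12 hskew23 hbskew hb hb0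
  refine ⟨jacobi_of_filippov hFI (e i₀) (apply_self_outer hskew12 hskew23 (e i₀)), ?_⟩
  intro x y z
  rw [← inducedBracket_apply, inducedBracket_coord_eq e i₀ hskew12 hskew23 hzero]

/-- If a 3-Lie algebra has a basis `(e_i)` and an index `i₀` such that all
brackets of basis vectors not involving `e_{i₀}` vanish, then the binary
bracket `[e_j,e_k] := [e_{i₀},e_j,e_k]` (with `[e_{i₀},·] = 0`), together with
the coordinate form `τ = coord_{i₀}` (assuming `τ` vanishes on the brackets),
satisfies the Jacobi identity and induces back the original ternary bracket. -/
theorem stmt17 (K A : Type*) [Field K] [CharZero K] [AddCommGroup A] [Module K A]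
    (d : ℕ) (e : Module.Basis (Fin d) K A) (i₀ : Fin d)
    (f : A →ₗ[K] A →ₗ[K] A →ₗ[K] A)
    (hskew12 : ∀ x y z : A, f x y z = - f y x z)
    (hskew23 : ∀ x y z : A, f x y z = - f x z y)
    (hFI : ∀ x₁ x₂ y₁ y₂ y₃ : A,
      f x₁ x₂ (f y₁ y₂ y₃)
        = f (f x₁ x₂ y₁) y₂ y₃ + f y₁ (f x₁ x₂ y₂) y₃ + f y₁ y₂ (f x₁ x₂ y₃))
    (hzero : ∀ j k l : Fin d, j ≠ i₀ → k ≠ i₀ → l ≠ i₀ → f (e j) (e k) (e l) = 0)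
    (b : A →ₗ[K] A →ₗ[K] A)
    (hbskew : ∀ x y : A, b x y = - b y x)
    (hb : ∀ j k : Fin d, j ≠ i₀ → k ≠ i₀ → b (e j) (e k) = f (e i₀) (e j) (e k))
    (hb0 : ∀ j : Fin d, b (e i₀) (e j) = 0)
    (hτf : ∀ j k : Fin d, e.coord i₀ (f (e i₀) (e j) (e k)) = 0) :
    (∀ x y z : A, b x (b y z) = b (b x y) z + b y (b x z)) ∧
    (∀ x y z : A,
      e.coord i₀ x • b y z + e.coord i₀ y • b z x + e.coord i₀ z • b x y
        = f x y z) :=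
  stmt17_general K A d e i₀ f hskew12 hskew23 hFI hzero b hbskew hb hb0
end

section
/- Let (A,[.,.]) be a Lie algebra over a field K of characteristic 0, τ a trace map, and suppose ψ₁, ψ₂ are trilinear maps given by ψ_i(x,y,z) = τ(x)φ_i(y,z) + τ(y)φ_i(z,x) + τ(z)φ_i(x,y) for skew-symmetric bilinear forms φ₁, φ₂: A × A → K. If φ₂ − φ₁ = δ¹α for some linear form α (i.e., (φ₂−φ₁)(x,y) = α([x,y])), then ψ₂ − ψ₁ = d¹α, where d¹α(x,y,z) = α([x,y,z]_τ). In particular ψ₁ and ψ₂ differ by a coboundary of the induced 3-Lie algebra. -/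
/-- If two skew-symmetric scalar 2-cochains `φ₁, φ₂` differ by the coboundary
`δ¹α`, then the induced ternary cochains `ψ_i(x,y,z) = Σ_cyc τ(x)φ_i(y,z)`
differ by the ternary coboundary `d¹α(x,y,z) = α([x,y,z]_τ)`. -/
theorem stmt18 (K A : Type*) [Field K] [CharZero K] [LieRing A] [LieAlgebra K A]
    (τ : A →ₗ[K] K) (hτ : ∀ x y : A, τ ⁅x, y⁆ = 0)
    (tb : A → A → A → A)
    (htb : ∀ x y z : A, tb x y z = τ x • ⁅y, z⁆ + τ y • ⁅z, x⁆ + τ z • ⁅x, y⁆)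
    (φ₁ φ₂ : A →ₗ[K] A →ₗ[K] K)
    (hφ₁ : ∀ x y : A, φ₁ x y = - φ₁ y x)
    (hφ₂ : ∀ x y : A, φ₂ x y = - φ₂ y x)
    (ψ₁ ψ₂ : A → A → A → K)
    (hψ₁ : ∀ x y z : A, ψ₁ x y z = τ x * φ₁ y z + τ y * φ₁ z x + τ z * φ₁ x y)
    (hψ₂ : ∀ x y z : A, ψ₂ x y z = τ x * φ₂ y z + τ y * φ₂ z x + τ z * φ₂ x y)
    (α : A →ₗ[K] K)
    (hα : ∀ x y : A, φ₂ x y - φ₁ x y = α ⁅x, y⁆) :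
    ∀ x y z : A, ψ₂ x y z - ψ₁ x y z = α (tb x y z) := by
  intro x y z
  rw [hψ₁, hψ₂, htb, map_add, map_add, map_smul, map_smul, map_smul,
    ← hα, ← hα, ← hα]
  simp only [smul_eq_mul]
  ring
end
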